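/- For c > 1/log 2 and a(c) = c log c, the scalar curvature s of the warped product metric k_c = dt² + f_c(t)² g_e on [0, ∞) × T² (with g_e flat and f_c as defined via the cutoff φ) satisfies a bound |s| ≤ C on the region t ∈ [a(c), a(c)+1], with C independent of c. Since the volume of this region is also bounded uniformly in c, the integral ∫_{[a(c),a(c)+1]×T²} |s| dV_{k_c} is bounded uniformly in c. -/

import Mathlib

open MeasureTheory

set_option maxHeartbeats 1000000 in
/-- Uniform bound on the scalar curvature of the gluing metric `k_c = dt² + f_c(t)² g_e`
on the region `t ∈ [a(c), a(c)+1]` (`a(c) = c log c`), and on the corresponding integral.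
For a warped product over a flat 2-torus of area `A`, the scalar curvature is
`s = −4 f''/f − 2 (f')²/f²` and the volume density is `f² · (area density of g_e)`.
There is a constant `C`, independent of `c > 1/log 2`, bounding both `|s|` pointwise on
the region and `∫_{[a(c),a(c)+1]×T²} |s| dV_{k_c}`. -/
theorem gluing_region_scalar_curvature_bound
    (φ : ℝ → ℝ) (hφsmooth : ContDiff ℝ (⊤ : ℕ∞) φ) (hφmono : Antitone φ)
    (hφrange : ∀ t, φ t ∈ Set.Icc (0 : ℝ) 1)
    (hφ0 : ∀ t, t ≤ 0 → φ t = 1) (hφ1 : ∀ t, 1 / 2 ≤ t → φ t = 0)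
    (A : ℝ) (hA : 0 ≤ A)
    (f : ℝ → ℝ → ℝ)
    (hf : ∀ c t, f c t = φ (t - c * Real.log c) * (c * Real.exp (-t / c))
      + 1 - φ (t - c * Real.log c))
    (s : ℝ → ℝ → ℝ)
    (hs : ∀ c t, s c t = -4 * deriv (deriv (f c)) t / f c t
      - 2 * (deriv (f c) t) ^ 2 / (f c t) ^ 2) :
    ∃ C : ℝ, ∀ c : ℝ, 1 / Real.log 2 < c →
      (∀ t ∈ Set.Icc (c * Real.log c) (c * Real.log c + 1), |s c t| ≤ C)
      ∧ (∫ t in Set.Icc (c * Real.log c) (c * Real.log c + 1),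
          |s c t| * (f c t) ^ 2 * A) ≤ C := by
  have hφinf : ContDiff ℝ ((⊤ : ℕ∞) : WithTop ℕ∞) φ := hφsmooth.of_le (by simp)
  have hφcont : Continuous φ := hφinf.continuous
  have hφdiff : Differentiable ℝ φ := (contDiff_infty_iff_deriv.mp hφinf).1
  have hφ'smooth : ContDiff ℝ ((⊤ : ℕ∞) : WithTop ℕ∞) (deriv φ) := (contDiff_infty_iff_deriv.mp hφinf).2
  have hφ'cont : Continuous (deriv φ) := hφ'smooth.continuous
  have hφ'diff : Differentiable ℝ (deriv φ) := (contDiff_infty_iff_deriv.mp hφ'smooth).1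
  have hφ''cont : Continuous (deriv (deriv φ)) :=
    ((contDiff_infty_iff_deriv.mp hφ'smooth).2).continuous
  -- vanishing of derivatives away from [0, 1/2]
  have h1zero : ∀ t : ℝ, t < 0 ∨ 1 / 2 < t → deriv φ t = 0 := by
    intro t ht
    rcases ht with ht | ht
    · have h : φ =ᶠ[nhds t] fun _ => (1 : ℝ) := by
        filter_upwards [Iio_mem_nhds ht] with x hx
        exact hφ0 x hx.le
      rw [h.deriv_eq]; simp
    · have h : φ =ᶠ[nhds t] fun _ => (0 : ℝ) := by
        filter_upwards [Ioi_mem_nhds ht] with x hx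
        exact hφ1 x hx.le
      rw [h.deriv_eq]; simp
  have h2zero : ∀ t : ℝ, t < 0 ∨ 1 / 2 < t → deriv (deriv φ) t = 0 := by
    intro t ht
    have h : deriv φ =ᶠ[nhds t] fun _ => (0 : ℝ) := by
      rcases ht with ht | ht
      · filter_upwards [Iio_mem_nhds ht] with x hx
        exact h1zero x (Or.inl hx)
      · filter_upwards [Ioi_mem_nhds ht] with x hx
        exact h1zero x (Or.inr hx)
    rw [h.deriv_eq]; simp
  -- uniform bounds on deriv φ and deriv (deriv φ)
  have bnd : ∀ ψ : ℝ → ℝ, Continuous ψ → (∀ t : ℝ, t < 0 ∨ 1 / 2 < t → ψ t = 0) →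
      ∃ M : ℝ, 0 ≤ M ∧ ∀ t, |ψ t| ≤ M := by
    intro ψ hc hz
    obtain ⟨Cb, hCb⟩ := (isCompact_Icc (a := (0:ℝ)) (b := 1/2)).exists_bound_of_continuousOn
      hc.continuousOn
    refine ⟨max Cb 0, le_max_right _ _, fun t => ?_⟩
    by_cases ht : t ∈ Set.Icc (0:ℝ) (1/2)
    · exact le_trans (by simpa [Real.norm_eq_abs] using hCb t ht) (le_max_left _ _)
    · have hz' : ψ t = 0 := by
        rcases not_and_or.mp (fun hmem => ht (Set.mem_Icc.mpr hmem)) with h | h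
        · exact hz t (Or.inl (lt_of_not_ge h))
        · exact hz t (Or.inr (lt_of_not_ge h))
      simp [hz', le_max_right]
  obtain ⟨M1, hM1nn, hM1⟩ := bnd (deriv φ) hφ'cont (fun t ht => h1zero t ht)
  obtain ⟨M2, hM2nn, hM2⟩ := bnd (deriv (deriv φ)) hφ''cont (fun t ht => h2zero t ht)
  obtain ⟨B1, hB1⟩ : ∃ x : ℝ, x = M1 + 1 := ⟨_, rfl⟩
  obtain ⟨B2, hB2⟩ : ∃ x : ℝ, x = M2 + 2 * M1 + 1 := ⟨_, rfl⟩
  obtain ⟨C1, hC1⟩ : ∃ x : ℝ, x = 8 * B2 + 8 * B1 ^ 2 := ⟨_, rfl⟩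
  have hB1nn : 0 ≤ B1 := by rw [hB1]; linarith
  have hB2nn : 0 ≤ B2 := by rw [hB2]; linarith
  have hC1nn : 0 ≤ C1 := by rw [hC1]; nlinarith [sq_nonneg B1]
  refine ⟨C1 * (1 + A), fun c hc => ?_⟩
  have hlog2pos : 0 < Real.log 2 := Real.log_pos one_lt_two
  have hlog2lt : Real.log 2 < 1 := by
    have := Real.log_two_lt_d9; linarith
  have hc1 : 1 < c := lt_trans (one_lt_one_div hlog2pos hlog2lt) hc
  have hc0 : 0 < c := lt_trans one_pos hc1
  have hcne : c ≠ 0 := ne_of_gt hc0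
  have hlogc : 0 < Real.log c := Real.log_pos hc1
  have hinvc : 1 / c < Real.log 2 := by
    rw [div_lt_iff₀ hc0]
    have h := (div_lt_iff₀ hlog2pos).mp hc
    nlinarith
  set a : ℝ := c * Real.log c with ha
  have hapos : 0 < a := mul_pos hc0 hlogc
  have hfc : f c = fun t => φ (t - a) * (c * Real.exp (-t / c)) + 1 - φ (t - a) := by
    funext t; rw [hf c t, ha]
  -- derivative computations
  have hφcomp : ∀ t : ℝ, HasDerivAt (fun x => φ (x - a)) (deriv φ (t - a)) t := by
    intro t
    have h1 : HasDerivAt (fun x : ℝ => x - a) 1 t := (hasDerivAt_id t).sub_const a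
    have h2 := ((hφdiff (t - a)).hasDerivAt).comp t h1; rw [mul_one] at h2; exact h2
  have hφ'comp : ∀ t : ℝ, HasDerivAt (fun x => deriv φ (x - a)) (deriv (deriv φ) (t - a)) t := by
    intro t
    have h1 : HasDerivAt (fun x : ℝ => x - a) 1 t := (hasDerivAt_id t).sub_const a
    have h2 := ((hφ'diff (t - a)).hasDerivAt).comp t h1; rw [mul_one] at h2; exact h2
  have hexp : ∀ t : ℝ, HasDerivAt (fun x : ℝ => Real.exp (-x / c))
      (Real.exp (-t / c) * (-1 / c)) t := by
    intro t
    exact (((hasDerivAt_id t).neg.div_const c)).exp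
  have hG : ∀ t : ℝ, HasDerivAt (fun x : ℝ => c * Real.exp (-x / c)) (-Real.exp (-t / c)) t := by
    intro t
    have h := (hexp t).const_mul c
    refine h.congr_deriv ?_
    linear_combination (-(Real.exp (-t / c))) * (mul_one_div_cancel hcne)
  have hF1 : ∀ t : ℝ, HasDerivAt (f c)
      (deriv φ (t - a) * (c * Real.exp (-t / c) - 1) - φ (t - a) * Real.exp (-t / c)) t := by
    intro t
    rw [hfc]
    have h6 := (((hφcomp t).mul (hG t)).add_const 1).sub (hφcomp t)
    refine h6.congr_deriv ?_
    ring
  have hd1 : ∀ t : ℝ, deriv (f c) t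
      = deriv φ (t - a) * (c * Real.exp (-t / c) - 1) - φ (t - a) * Real.exp (-t / c) :=
    fun t => (hF1 t).deriv
  have hF2 : ∀ t : ℝ, HasDerivAt (deriv (f c))
      (deriv (deriv φ) (t - a) * (c * Real.exp (-t / c) - 1)
        - 2 * deriv φ (t - a) * Real.exp (-t / c) + φ (t - a) * Real.exp (-t / c) / c) t := by
    intro t
    have heq : deriv (f c) = fun x => deriv φ (x - a) * (c * Real.exp (-x / c) - 1)
        - φ (x - a) * Real.exp (-x / c) := funext hd1
    rw [heq]
    have j2 : HasDerivAt (fun x : ℝ => c * Real.exp (-x / c) - 1) (-Real.exp (-t / c)) t :=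
      (hG t).sub_const 1
    have j := ((hφ'comp t).mul j2).sub ((hφcomp t).mul (hexp t))
    refine j.congr_deriv ?_
    ring
  have hd2 : ∀ t : ℝ, deriv (deriv (f c)) t
      = deriv (deriv φ) (t - a) * (c * Real.exp (-t / c) - 1)
        - 2 * deriv φ (t - a) * Real.exp (-t / c) + φ (t - a) * Real.exp (-t / c) / c :=
    fun t => (hF2 t).deriv
  -- bounds on the region
  have region : ∀ t ∈ Set.Icc a (a + 1),
      1 / 2 ≤ f c t ∧ f c t ≤ 1 ∧ |deriv (f c) t| ≤ B1 ∧ |deriv (deriv (f c)) t| ≤ B2 := by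
    intro t ht
    obtain ⟨ht1, ht2⟩ := ht
    have hele : Real.exp (-t / c) ≤ 1 / c := by
      have h : -t / c ≤ -Real.log c := by
        rw [neg_div, neg_le_neg_iff, le_div_iff₀ hc0]
        nlinarith
      calc Real.exp (-t / c) ≤ Real.exp (-Real.log c) := Real.exp_le_exp.mpr h
        _ = 1 / c := by rw [Real.exp_neg, Real.exp_log hc0, one_div]
    have hele1 : Real.exp (-t / c) ≤ 1 := by
      have h : -t / c ≤ 0 := div_nonpos_of_nonpos_of_nonneg (by linarith) hc0.le
      calc Real.exp (-t / c) ≤ Real.exp 0 := Real.exp_le_exp.mpr h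
        _ = 1 := Real.exp_zero
    have henn : 0 < Real.exp (-t / c) := Real.exp_pos _
    have hcele : c * Real.exp (-t / c) ≤ 1 := by
      calc c * Real.exp (-t / c) ≤ c * (1 / c) := mul_le_mul_of_nonneg_left hele hc0.le
        _ = 1 := by field_simp
    have hcege : 1 / 2 ≤ c * Real.exp (-t / c) := by
      have key : -Real.log c - 1 / c ≤ -t / c := by
        rw [le_div_iff₀ hc0]
        have hone : (1 / c) * c = 1 := one_div_mul_cancel hcne
        nlinarith
      calc (1 : ℝ) / 2 = Real.exp (-Real.log 2) := by
            rw [Real.exp_neg, Real.exp_log (by norm_num : (0:ℝ) < 2)]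
            norm_num
        _ ≤ Real.exp (-(1 / c)) := Real.exp_le_exp.mpr (by linarith)
        _ = c * Real.exp (-Real.log c - 1 / c) := by
            rw [show -Real.log c - 1 / c = -(1 / c) - Real.log c by ring, Real.exp_sub,
              Real.exp_log hc0]
            rw [← mul_div_assoc, mul_div_cancel_left₀ _ hcne]
        _ ≤ c * Real.exp (-t / c) :=
            mul_le_mul_of_nonneg_left (Real.exp_le_exp.mpr key) hc0.le
    have hr := hφrange (t - a)
    rw [Set.mem_Icc] at hr
    have hfval : f c t = φ (t - a) * (c * Real.exp (-t / c)) + 1 - φ (t - a) := by rw [hfc]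
    refine ⟨?_, ?_, ?_, ?_⟩
    · rw [hfval]
      nlinarith [mul_nonneg (by linarith : (0:ℝ) ≤ 1 - φ (t - a))
        (by linarith : (0:ℝ) ≤ 1 - c * Real.exp (-t / c))]
    · rw [hfval]
      nlinarith [mul_nonneg hr.1 (by linarith : (0:ℝ) ≤ 1 - c * Real.exp (-t / c))]
    · rw [hd1 t]
      have habs1 : |deriv φ (t - a)| ≤ M1 := hM1 _
      have habs2 : |φ (t - a)| ≤ 1 := abs_le.mpr ⟨by linarith, hr.2⟩
      have h3 : |c * Real.exp (-t / c) - 1| ≤ 1 / 2 :=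
        abs_le.mpr ⟨by linarith, by linarith⟩
      have h4 : |Real.exp (-t / c)| ≤ 1 := abs_le.mpr ⟨by linarith, hele1⟩
      calc |deriv φ (t - a) * (c * Real.exp (-t / c) - 1) - φ (t - a) * Real.exp (-t / c)|
          ≤ |deriv φ (t - a) * (c * Real.exp (-t / c) - 1)|
            + |φ (t - a) * Real.exp (-t / c)| := abs_sub _ _
        _ = |deriv φ (t - a)| * |c * Real.exp (-t / c) - 1|
            + |φ (t - a)| * |Real.exp (-t / c)| := by rw [abs_mul, abs_mul]
        _ ≤ M1 * (1 / 2) + 1 * 1 := add_le_add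
            (mul_le_mul habs1 h3 (abs_nonneg _) hM1nn)
            (mul_le_mul habs2 h4 (abs_nonneg _) one_pos.le)
        _ ≤ B1 := by rw [hB1]; linarith
    · rw [hd2 t]
      have habsD : |deriv (deriv φ) (t - a)| ≤ M2 := hM2 _
      have habs1 : |deriv φ (t - a)| ≤ M1 := hM1 _
      have habs2 : |φ (t - a)| ≤ 1 := abs_le.mpr ⟨by linarith, hr.2⟩
      have h3 : |c * Real.exp (-t / c) - 1| ≤ 1 / 2 :=
        abs_le.mpr ⟨by linarith, by linarith⟩
      have h4 : |Real.exp (-t / c)| ≤ 1 := abs_le.mpr ⟨by linarith, hele1⟩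
      have hZ : |φ (t - a) * Real.exp (-t / c) / c| ≤ 1 := by
        rw [abs_div, abs_of_pos hc0, abs_mul]
        calc |φ (t - a)| * |Real.exp (-t / c)| / c
            ≤ |φ (t - a)| * |Real.exp (-t / c)| :=
              div_le_self (mul_nonneg (abs_nonneg _) (abs_nonneg _)) hc1.le
          _ ≤ 1 * 1 := mul_le_mul habs2 h4 (abs_nonneg _) one_pos.le
          _ = 1 := by norm_num
      have hY : |2 * deriv φ (t - a) * Real.exp (-t / c)| ≤ 2 * M1 := by
        rw [abs_mul, abs_mul]
        have : |(2:ℝ)| = 2 := by norm_num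
        rw [this]
        calc 2 * |deriv φ (t - a)| * |Real.exp (-t / c)|
            ≤ 2 * M1 * 1 := mul_le_mul (by linarith) h4 (abs_nonneg _) (by linarith)
          _ = 2 * M1 := by ring
      have hX : |deriv (deriv φ) (t - a) * (c * Real.exp (-t / c) - 1)| ≤ M2 * (1 / 2) := by
        rw [abs_mul]
        exact mul_le_mul habsD h3 (abs_nonneg _) hM2nn
      calc |deriv (deriv φ) (t - a) * (c * Real.exp (-t / c) - 1)
            - 2 * deriv φ (t - a) * Real.exp (-t / c) + φ (t - a) * Real.exp (-t / c) / c|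
          ≤ |deriv (deriv φ) (t - a) * (c * Real.exp (-t / c) - 1)
            - 2 * deriv φ (t - a) * Real.exp (-t / c)|
            + |φ (t - a) * Real.exp (-t / c) / c| := abs_add_le _ _
        _ ≤ |deriv (deriv φ) (t - a) * (c * Real.exp (-t / c) - 1)|
            + |2 * deriv φ (t - a) * Real.exp (-t / c)|
            + |φ (t - a) * Real.exp (-t / c) / c| := by
              have := abs_sub (deriv (deriv φ) (t - a) * (c * Real.exp (-t / c) - 1))
                (2 * deriv φ (t - a) * Real.exp (-t / c))
              linarith
        _ ≤ M2 * (1 / 2) + 2 * M1 + 1 := by linarith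
        _ ≤ B2 := by rw [hB2]; linarith
  -- pointwise scalar curvature bound
  have hpoint : ∀ t ∈ Set.Icc a (a + 1), |s c t| ≤ C1 := by
    intro t ht
    obtain ⟨hf12, hfle1, hd1b, hd2b⟩ := region t ht
    rw [hs c t]
    have hfpos : 0 < f c t := by linarith
    have e1 : |(-4) * deriv (deriv (f c)) t / f c t| ≤ 8 * B2 := by
      rw [abs_div, abs_of_pos hfpos, div_le_iff₀ hfpos, abs_mul]
      have h4 : |(-4 : ℝ)| = 4 := by norm_num
      rw [h4]
      nlinarith [abs_nonneg (deriv (deriv (f c)) t),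
        mul_nonneg hB2nn (by linarith : (0:ℝ) ≤ f c t - 1 / 2)]
    have e2 : |2 * (deriv (f c) t) ^ 2 / (f c t) ^ 2| ≤ 8 * B1 ^ 2 := by
      have hfp2 : 0 < (f c t) ^ 2 := by positivity
      rw [abs_div, abs_of_pos hfp2, div_le_iff₀ hfp2, abs_mul]
      have h2 : |(2:ℝ)| = 2 := by norm_num
      have hsq : |(deriv (f c) t) ^ 2| = (deriv (f c) t) ^ 2 := abs_of_nonneg (sq_nonneg _)
      rw [h2, hsq]
      have hq : (deriv (f c) t) ^ 2 ≤ B1 ^ 2 := by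
        nlinarith [sq_abs (deriv (f c) t), abs_nonneg (deriv (f c) t)]
      nlinarith [mul_nonneg (sq_nonneg B1) (show (0:ℝ) ≤ (f c t) ^ 2 - 1 / 4 by nlinarith)]
    calc |-4 * deriv (deriv (f c)) t / f c t - 2 * (deriv (f c) t) ^ 2 / (f c t) ^ 2|
        ≤ |(-4) * deriv (deriv (f c)) t / f c t|
          + |2 * (deriv (f c) t) ^ 2 / (f c t) ^ 2| := abs_sub _ _
      _ ≤ 8 * B2 + 8 * B1 ^ 2 := add_le_add e1 e2
      _ = C1 := hC1.symm
  constructor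
  · intro t ht
    have h := hpoint t ht
    nlinarith
  · -- the integral bound
    have hcf : Continuous (f c) := by
      rw [hfc]
      exact (((hφcont.comp (continuous_id.sub continuous_const)).mul
        (continuous_const.mul (Real.continuous_exp.comp
          ((continuous_id.neg).div_const c)))).add continuous_const).sub
        (hφcont.comp (continuous_id.sub continuous_const))
    have hce : Continuous fun x : ℝ => Real.exp (-x / c) :=
      Real.continuous_exp.comp ((continuous_id.neg).div_const c)
    have hcd1 : Continuous (deriv (f c)) := by
      have heq : deriv (f c) = fun x => deriv φ (x - a) * (c * Real.exp (-x / c) - 1)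
          - φ (x - a) * Real.exp (-x / c) := funext hd1
      rw [heq]
      exact ((hφ'cont.comp (continuous_id.sub continuous_const)).mul
        ((continuous_const.mul hce).sub continuous_const)).sub
        ((hφcont.comp (continuous_id.sub continuous_const)).mul hce)
    have hcd2 : Continuous (deriv (deriv (f c))) := by
      have heq : deriv (deriv (f c)) = fun x => deriv (deriv φ) (x - a)
          * (c * Real.exp (-x / c) - 1)
          - 2 * deriv φ (x - a) * Real.exp (-x / c)
          + φ (x - a) * Real.exp (-x / c) / c := funext hd2
      rw [heq]
      exact (((hφ''cont.comp (continuous_id.sub continuous_const)).mul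
        ((continuous_const.mul hce).sub continuous_const)).sub
        ((continuous_const.mul (hφ'cont.comp (continuous_id.sub continuous_const))).mul
          hce)).add
        (((hφcont.comp (continuous_id.sub continuous_const)).mul hce).div_const c)
    have hcsK : ContinuousOn (s c) (Set.Icc a (a + 1)) := by
      have heq : s c = fun t => -4 * deriv (deriv (f c)) t / f c t
          - 2 * (deriv (f c) t) ^ 2 / (f c t) ^ 2 := funext (hs c)
      rw [heq]
      apply ContinuousOn.sub
      · exact (continuous_const.mul hcd2).continuousOn.div hcf.continuousOn
          (fun t ht => ne_of_gt (by linarith [(region t ht).1]))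
      · exact ((continuous_const.mul (hcd1.pow 2)).continuousOn).div
          ((hcf.pow 2).continuousOn)
          (fun t ht => pow_ne_zero 2 (ne_of_gt (by linarith [(region t ht).1])))
    have hgcont : ContinuousOn (fun t => |s c t| * (f c t) ^ 2 * A) (Set.Icc a (a + 1)) :=
      (hcsK.abs.mul ((hcf.pow 2).continuousOn)).mul continuousOn_const
    have hgint : IntegrableOn (fun t => |s c t| * (f c t) ^ 2 * A) (Set.Icc a (a + 1)) :=
      hgcont.integrableOn_Icc
    have hbound : ∀ t ∈ Set.Icc a (a + 1), |s c t| * (f c t) ^ 2 * A ≤ C1 * A := by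
      intro t ht
      obtain ⟨h12, h1, _, _⟩ := region t ht
      have hp := hpoint t ht
      have hs0 : 0 ≤ |s c t| := abs_nonneg _
      have hf2 : (f c t) ^ 2 ≤ 1 := by nlinarith
      have hf2nn : 0 ≤ (f c t) ^ 2 := sq_nonneg _
      have key : |s c t| * (f c t) ^ 2 ≤ C1 := by nlinarith
      nlinarith
    calc (∫ t in Set.Icc a (a + 1), |s c t| * (f c t) ^ 2 * A)
        ≤ ∫ _t in Set.Icc a (a + 1), C1 * A := by
          apply setIntegral_mono_on hgint
            (integrableOn_const measure_Icc_lt_top.ne) measurableSet_Icc hbound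
      _ = (volume (Set.Icc a (a + 1))).toReal * (C1 * A) := by
          rw [setIntegral_const, smul_eq_mul]; rfl
      _ = C1 * A := by
          rw [Real.volume_Icc]
          norm_num
      _ ≤ C1 * (1 + A) := by nlinarith
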